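/- Let p ∈ K[x_1,…,x_n] and let N ⊆ K[x_1,…,x_n] be a nonzero K-subspace invariant under ρ_p(z) for every z ∈ sl_{n+1}(K). Then there exists k ∈ ℕ such that N equals the span of all monomials of total degree at least k; in particular every nonzero submodule of M(p) is a homogeneous ideal of K[x_1,…,x_n] of this form. -/

import Mathlib

open LieAlgebra.SpecialLinear Matrix

attribute [local instance 100] LieRing.ofAssociativeRing

/-- The matrix unit `e_{ab}` (for `a ≠ b`) as an element of `sl_N(K)`. -/
noncomputable def eE {K : Type*} [Field K] {N : ℕ} (a b : Fin N) (hab : a ≠ b) :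
    sl (Fin N) K := LieAlgebra.SpecialLinear.single a b hab (1 : K)

/-- The element `h_i = e_{ii} - (1/(n+1))·I` of `sl_{n+1}(K)` (indices `1 ≤ i ≤ n`). -/
noncomputable def hE {K : Type*} [Field K] [CharZero K] {n : ℕ} (i : Fin n) :
    sl (Fin (n + 1)) K :=
  ⟨Matrix.single i.castSucc i.castSucc (1 : K) - ((n + 1 : K))⁻¹ • 1, by
    show _ ∈ LinearMap.ker (Matrix.traceLinearMap (Fin (n + 1)) K K)
    rw [LinearMap.mem_ker, map_sub]
    have h1 : (Matrix.traceLinearMap (Fin (n + 1)) K K)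
        (Matrix.single i.castSucc i.castSucc (1 : K)) = 1 := by
      simp [Matrix.traceLinearMap, Matrix.trace, Matrix.diag, Matrix.single,
        Finset.sum_ite_eq]
    have h2 : (Matrix.traceLinearMap (Fin (n + 1)) K K)
        (((n + 1 : K))⁻¹ • (1 : Matrix (Fin (n + 1)) (Fin (n + 1)) K)) = 1 := by
      rw [_root_.map_smul]
      simp only [Matrix.traceLinearMap_apply, Matrix.trace_one, Fintype.card_fin,
        smul_eq_mul]
      push_cast
      exact inv_mul_cancel₀ (Nat.cast_add_one_ne_zero n)
    rw [h1, h2, sub_self]⟩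

/-- The element `e_{i,n+1}` of `sl_{n+1}(K)` (denoted `x_i`), for `1 ≤ i ≤ n`. -/
noncomputable def xg {K : Type*} [Field K] {n : ℕ} (i : Fin n) : sl (Fin (n + 1)) K :=
  eE i.castSucc (Fin.last n) (Fin.castSucc_lt_last i).ne

/-- The element `e_{ij}` of `sl_{n+1}(K)` for `1 ≤ i ≠ j ≤ n`. -/
noncomputable def eg {K : Type*} [Field K] {n : ℕ} (i j : Fin n) (hij : i ≠ j) :
    sl (Fin (n + 1)) K :=
  eE i.castSucc j.castSucc (by simpa [Fin.ext_iff] using hij)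

/-- The element `e_{n+1,i}` of `sl_{n+1}(K)` for `1 ≤ i ≤ n`. -/
noncomputable def fg {K : Type*} [Field K] {n : ℕ} (i : Fin n) : sl (Fin (n + 1)) K :=
  eE (Fin.last n) i.castSucc (Fin.castSucc_lt_last i).ne'

/-- The element `h̄ = h_1 + ⋯ + h_n` of `sl_{n+1}(K)`. -/
noncomputable def hbar (K : Type*) [Field K] [CharZero K] (n : ℕ) :
    sl (Fin (n + 1)) K := ∑ i : Fin n, hE i

/-- The polynomial `p_{ij} := x_i·∂p/∂x_j + δ_{ij}·p(0)/n`. -/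
noncomputable def pcoef {K : Type*} [Field K] {n : ℕ} (p : MvPolynomial (Fin n) K)
    (i j : Fin n) : MvPolynomial (Fin n) K :=
  MvPolynomial.X i * MvPolynomial.pderiv j p
    + if i = j then MvPolynomial.C (MvPolynomial.coeff 0 p / (n : K)) else 0

section Aux17
open MvPolynomial Finsupp

private lemma Xmul_monomial {K : Type*} [CommSemiring K] {n : ℕ} (i : Fin n)
    (s : Fin n →₀ ℕ) (a : K) : X i * monomial s a = monomial (s + Finsupp.single i 1) a := by
  rw [X, monomial_mul, one_mul, add_comm]

private lemma coeff_theta {K : Type*} [CommSemiring K] {n : ℕ} (i : Fin n)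
    (f : MvPolynomial (Fin n) K) (d : Fin n →₀ ℕ) :
    coeff d (X i * pderiv i f) = (d i : K) * coeff d f := by
  induction f using MvPolynomial.induction_on' with
  | monomial s a =>
    rw [pderiv_monomial]
    rcases Nat.eq_zero_or_pos (s i) with h | h
    · simp only [h, Nat.cast_zero, mul_zero, map_zero, coeff_zero, coeff_monomial]
      split
      · next hsd => subst hsd; simp [h]
      · simp
    · have hle : Finsupp.single i 1 ≤ s := by
        rw [Finsupp.single_le_iff]; exact h
      rw [Xmul_monomial, tsub_add_cancel_of_le hle]
      simp only [coeff_monomial]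
      split
      · next hsd => subst hsd; ring
      · simp
  | add p q hp hq => rw [map_add, mul_add, coeff_add, coeff_add, hp, hq, mul_add]

private lemma extract_monomial {K : Type*} [Field K] [CharZero K] {n : ℕ}
    (N : Submodule K (MvPolynomial (Fin n) K))
    (hθ : ∀ (i : Fin n) (f : MvPolynomial (Fin n) K), f ∈ N → X i * pderiv i f ∈ N) :
    ∀ (m : ℕ) (f : MvPolynomial (Fin n) K), f ∈ N → f.support.card ≤ m →
      ∀ d, monomial d (coeff d f) ∈ N := by
  intro m
  induction m with
  | zero =>
    intro f hf hc d
    have hf0 : f = 0 := MvPolynomial.support_eq_empty.mp (Finset.card_eq_zero.mp (Nat.le_zero.mp hc))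
    subst hf0
    simp only [coeff_zero, map_zero]
    exact N.zero_mem
  | succ m ih =>
    intro f hf hc d
    by_cases h1 : f.support.card ≤ 1
    · by_cases hd : d ∈ f.support
      · have hs : f.support = {d} := by
          obtain ⟨a, ha⟩ := Finset.card_eq_one.mp
            (le_antisymm h1 (Finset.card_pos.mpr ⟨d, hd⟩))
          rw [ha] at hd ⊢
          rw [Finset.mem_singleton.mp hd]
        have : f = monomial d (coeff d f) := by
          conv_lhs => rw [f.as_sum]
          rw [hs, Finset.sum_singleton]
        rw [← this]; exact hf
      · rw [MvPolynomial.notMem_support_iff.mp hd, map_zero]; exact N.zero_mem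
    · obtain ⟨a, ha, b, hb, hab⟩ := Finset.one_lt_card.mp (not_le.mp h1)
      obtain ⟨i, hi⟩ : ∃ i, a i ≠ b i := by
        by_contra h; push_neg at h; exact hab (Finsupp.ext h)
      obtain ⟨c, hcs, hci⟩ : ∃ c ∈ f.support, c i ≠ d i := by
        by_cases h : a i = d i
        · exact ⟨b, hb, fun hbd => hi (h.trans hbd.symm)⟩
        · exact ⟨a, ha, h⟩
      set g := X i * pderiv i f - ((c i : K)) • f with hg
      have hgN : g ∈ N := N.sub_mem (hθ i f hf) (N.smul_mem _ hf)
      have hgc : ∀ e, coeff e g = ((e i : K) - (c i : K)) * coeff e f := by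
        intro e
        rw [hg, coeff_sub, coeff_theta, coeff_smul, smul_eq_mul, sub_mul]
      have hsub : g.support ⊆ f.support.erase c := by
        intro e he
        rw [MvPolynomial.mem_support_iff, hgc] at he
        rw [Finset.mem_erase, MvPolynomial.mem_support_iff]
        refine ⟨fun hec => ?_, fun h0 => he (by rw [h0, mul_zero])⟩
        subst hec; simp at he
      have hcard : g.support.card ≤ m := by
        have := Finset.card_le_card hsub
        rw [Finset.card_erase_of_mem hcs] at this
        omega
      have hdg := ih g hgN hcard d
      rw [hgc d] at hdg
      have hδ : ((d i : K) - (c i : K)) ≠ 0 := by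
        rw [sub_ne_zero]
        exact fun h => hci (Nat.cast_injective h).symm
      have := N.smul_mem ((d i : K) - (c i : K))⁻¹ hdg
      rwa [smul_monomial, smul_eq_mul, inv_mul_cancel_left₀ hδ] at this

private def sdeg {n : ℕ} (d : Fin n →₀ ℕ) : ℕ := ∑ i, d i

private lemma sdeg_add {n : ℕ} (a b : Fin n →₀ ℕ) : sdeg (a + b) = sdeg a + sdeg b := by
  simp [sdeg, Finset.sum_add_distrib]

private lemma sdeg_single {n : ℕ} (j : Fin n) : sdeg (Finsupp.single j 1) = 1 := by
  simp [sdeg, Finsupp.single_apply]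

private lemma le_sdeg {n : ℕ} (d : Fin n →₀ ℕ) (i : Fin n) : d i ≤ sdeg d :=
  Finset.single_le_sum (fun k _ => Nat.zero_le (d k)) (Finset.mem_univ i)

private lemma sdeg_eq_fsum {n : ℕ} (d : Fin n →₀ ℕ) :
    d.sum (fun _ e => e) = sdeg d :=
  Finsupp.sum_fintype d _ (fun _ => rfl)

private lemma eq_single_of_sdeg_le {n : ℕ} (d : Fin n →₀ ℕ) (i0 : Fin n)
    (h : sdeg d ≤ d i0) : d = Finsupp.single i0 (sdeg d) := by
  have hi0 : d i0 = sdeg d := le_antisymm (le_sdeg d i0) h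
  ext k
  rcases eq_or_ne k i0 with rfl | hk
  · simp [hi0]
  · have hpair : d k + d i0 ≤ sdeg d := by
      have : ∑ x ∈ ({k, i0} : Finset (Fin n)), d x ≤ sdeg d :=
        Finset.sum_le_sum_of_subset (Finset.subset_univ _)
      rwa [Finset.sum_pair hk] at this
    have : d k = 0 := by omega
    simp [this, Finsupp.single_apply, (Ne.symm hk : i0 ≠ k)]

private lemma exists_ne_pos {n : ℕ} (d : Fin n →₀ ℕ) (i0 : Fin n)
    (h : ¬ sdeg d ≤ d i0) : ∃ j, j ≠ i0 ∧ d j ≠ 0 := by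
  by_contra hcon
  push_neg at hcon
  refine h (le_of_eq ?_)
  have : d = Finsupp.single i0 (d i0) := by
    ext k
    rcases eq_or_ne k i0 with rfl | hk
    · simp
    · simp [hcon k hk, Finsupp.single_apply, (Ne.symm hk : i0 ≠ k)]
  calc sdeg d = sdeg (Finsupp.single i0 (d i0)) := by rw [← this]
  _ = d i0 := by simp [sdeg, Finsupp.single_apply]

section Conn
variable {K : Type*} [Field K] [CharZero K] {n : ℕ}
  (N : Submodule K (MvPolynomial (Fin n) K))
  (hmv : ∀ (i j : Fin n) (f : MvPolynomial (Fin n) K), f ∈ N → X i * pderiv j f ∈ N)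

include hmv

private lemma moveN (t : Fin n →₀ ℕ) (i j : Fin n)
    (hm : monomial (t + Finsupp.single j 1) 1 ∈ N) : monomial (t + Finsupp.single i 1) 1 ∈ N := by
  have h1 := hmv i j _ hm
  rw [pderiv_monomial, add_tsub_cancel_right, Xmul_monomial] at h1
  have hc : ((t + Finsupp.single j 1) : Fin n →₀ ℕ) j = t j + 1 := by
    rw [Finsupp.add_apply, Finsupp.single_eq_same]
  rw [hc, one_mul] at h1
  push_cast at h1
  have hδ : ((t j : ℕ) + 1 : K) ≠ 0 := Nat.cast_add_one_ne_zero (t j)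
  have := N.smul_mem ((t j : ℕ) + 1 : K)⁻¹ h1
  rwa [smul_monomial, smul_eq_mul, inv_mul_cancel₀ hδ] at this

private lemma toConc (i0 : Fin n) :
    ∀ (m : ℕ) (d : Fin n →₀ ℕ), sdeg d ≤ m + d i0 → monomial d 1 ∈ N →
      monomial (Finsupp.single i0 (sdeg d)) 1 ∈ N := by
  intro m
  induction m with
  | zero =>
    intro d hm hd
    rwa [← eq_single_of_sdeg_le d i0 (by omega)]
  | succ m ih =>
    intro d hm hd
    by_cases hle : sdeg d ≤ d i0
    · rwa [← eq_single_of_sdeg_le d i0 hle]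
    · obtain ⟨j, hji, hj⟩ := exists_ne_pos d i0 hle
      have hsle : Finsupp.single j 1 ≤ d := by rw [Finsupp.single_le_iff]; omega
      set t := d - Finsupp.single j 1 with ht
      have hdt : d = t + Finsupp.single j 1 := (tsub_add_cancel_of_le hsle).symm
      have hd' : monomial (t + Finsupp.single i0 1) 1 ∈ N := by
        refine moveN N hmv t i0 j ?_
        rwa [← hdt]
      have hsd : sdeg d = sdeg t + 1 := by rw [hdt, sdeg_add, sdeg_single]
      have hti0 : t i0 = d i0 := by
        rw [hdt, Finsupp.add_apply, Finsupp.single_apply, if_neg hji, add_zero]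
      have hsd' : sdeg (t + Finsupp.single i0 1) = sdeg d := by rw [sdeg_add, sdeg_single, hsd]
      have hm' : sdeg (t + Finsupp.single i0 1) ≤ m + ((t + Finsupp.single i0 1) : Fin n →₀ ℕ) i0 := by
        have h1 : ((t + Finsupp.single i0 1) : Fin n →₀ ℕ) i0 = t i0 + 1 := by
          rw [Finsupp.add_apply, Finsupp.single_eq_same]
        omega
      have := ih (t + Finsupp.single i0 1) hm' hd'
      rwa [hsd'] at this

private lemma fromConc (i0 : Fin n) :
    ∀ (m : ℕ) (e : Fin n →₀ ℕ), sdeg e ≤ m + e i0 →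
      monomial (Finsupp.single i0 (sdeg e)) 1 ∈ N → monomial e 1 ∈ N := by
  intro m
  induction m with
  | zero =>
    intro e hm hc
    rwa [← eq_single_of_sdeg_le e i0 (by omega)] at hc
  | succ m ih =>
    intro e hm hc
    by_cases hle : sdeg e ≤ e i0
    · rwa [← eq_single_of_sdeg_le e i0 hle] at hc
    · obtain ⟨j, hji, hj⟩ := exists_ne_pos e i0 hle
      have hsle : Finsupp.single j 1 ≤ e := by rw [Finsupp.single_le_iff]; omega
      set t := e - Finsupp.single j 1 with ht
      have het : e = t + Finsupp.single j 1 := (tsub_add_cancel_of_le hsle).symm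
      have hsd : sdeg e = sdeg t + 1 := by rw [het, sdeg_add, sdeg_single]
      have hti0 : t i0 = e i0 := by
        rw [het, Finsupp.add_apply, Finsupp.single_apply, if_neg hji, add_zero]
      have hsd' : sdeg (t + Finsupp.single i0 1) = sdeg e := by rw [sdeg_add, sdeg_single, hsd]
      have hm' : sdeg (t + Finsupp.single i0 1) ≤ m + ((t + Finsupp.single i0 1) : Fin n →₀ ℕ) i0 := by
        have h1 : ((t + Finsupp.single i0 1) : Fin n →₀ ℕ) i0 = t i0 + 1 := by
          rw [Finsupp.add_apply, Finsupp.single_eq_same]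
        omega
      have he' : monomial (t + Finsupp.single i0 1) 1 ∈ N := by
        refine ih (t + Finsupp.single i0 1) hm' ?_
        rwa [hsd']
      rw [het]
      exact moveN N hmv t j i0 he'

private lemma connN (d e : Fin n →₀ ℕ) (hde : sdeg d = sdeg e) (hn : 1 ≤ n)
    (hd : monomial d 1 ∈ N) : monomial e 1 ∈ N := by
  have i0 : Fin n := ⟨0, hn⟩
  have h1 := toConc N hmv i0 (sdeg d) d (Nat.le_add_right _ _) hd
  rw [hde] at h1
  exact fromConc N hmv i0 (sdeg e) e (Nat.le_add_right _ _) h1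

end Conn

private lemma mulmemN {K : Type*} [Field K] {n : ℕ}
    (N : Submodule K (MvPolynomial (Fin n) K))
    (hX : ∀ (i : Fin n) (f : MvPolynomial (Fin n) K), f ∈ N → X i * f ∈ N) :
    ∀ (g f : MvPolynomial (Fin n) K), f ∈ N → g * f ∈ N := by
  intro g f hf
  induction g using MvPolynomial.induction_on with
  | C a => rw [MvPolynomial.C_mul']; exact N.smul_mem a hf
  | add p q hp hq => rw [add_mul]; exact N.add_mem hp hq
  | mul_X g i hg =>
    have he : g * X i * f = X i * (g * f) := by ring
    rw [he]; exact hX i _ hg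


end Aux17

open MvPolynomial in
/-- Every nonzero subspace of `K[x_1,…,x_n]` invariant under the
`M(p)`-action `ρ_p` is the span of all monomials of total degree at least `k`,
for some `k ∈ ℕ`. -/
theorem stmt17 (K : Type*) [Field K] [IsAlgClosed K] [CharZero K]
    (n : ℕ) (hn : 1 ≤ n) (p : MvPolynomial (Fin n) K)
    (q : Fin n → MvPolynomial (Fin n) K)
    (hq : ∀ i : Fin n,
      X i * pderiv i (q i) + q i
        + ∑ r : Fin n,
            (pderiv r (pcoef p i i) * pcoef p r i
              + X r * pderiv i (pderiv r (pcoef p i i))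
              + pderiv i (pcoef p i i) * pcoef p r r) = 0)
    (ρp : sl (Fin (n + 1)) K →ₗ⁅K⁆ Module.End K (MvPolynomial (Fin n) K))
    (hxp : ∀ (i : Fin n) (f : MvPolynomial (Fin n) K), ρp (xg i) f = X i * f)
    (hhp : ∀ (i : Fin n) (f : MvPolynomial (Fin n) K),
      ρp (hE i) f = pcoef p i i * f + X i * pderiv i f)
    (hep : ∀ (i j : Fin n) (hij : i ≠ j) (f : MvPolynomial (Fin n) K),
      ρp (eg i j hij) f = pcoef p i j * f + X i * pderiv j f)
    (hfp : ∀ (i : Fin n) (f : MvPolynomial (Fin n) K),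
      ρp (fg i) f = q i * f
        - ∑ r : Fin n,
            (pcoef p r i * pderiv r f + pcoef p r r * pderiv i f
              + X r * pderiv i (pderiv r f)))
    (N : Submodule K (MvPolynomial (Fin n) K)) (hN : N ≠ ⊥)
    (hNinv : ∀ (z : sl (Fin (n + 1)) K), ∀ f ∈ N, ρp z f ∈ N) :
    ∃ k : ℕ, N = Submodule.span K
      {m : MvPolynomial (Fin n) K |
        ∃ d : Fin n →₀ ℕ, k ≤ d.sum (fun _ e => e) ∧ m = monomial d 1} := by
  classical
  have hX : ∀ (i : Fin n) (f : MvPolynomial (Fin n) K), f ∈ N → X i * f ∈ N := by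
    intro i f hf
    rw [← hxp i f]
    exact hNinv _ f hf
  have hmul := mulmemN N hX
  have hmv : ∀ (i j : Fin n) (f : MvPolynomial (Fin n) K), f ∈ N → X i * pderiv j f ∈ N := by
    intro i j f hf
    rcases eq_or_ne i j with rfl | hij
    · have h1 := hNinv (hE i) f hf
      rw [hhp i f] at h1
      have := N.sub_mem h1 (hmul (pcoef p i i) f hf)
      rwa [add_sub_cancel_left] at this
    · have h1 := hNinv (eg i j hij) f hf
      rw [hep i j hij f] at h1
      have := N.sub_mem h1 (hmul (pcoef p i j) f hf)
      rwa [add_sub_cancel_left] at this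
  have hmono : ∀ f ∈ N, ∀ d, monomial d (coeff d f) ∈ N := fun f hf d =>
    extract_monomial N (fun i g hg => hmv i i g hg) f.support.card f hf le_rfl d
  have hmono1 : ∀ f ∈ N, ∀ d ∈ f.support, monomial d 1 ∈ N := by
    intro f hf d hd
    have hc : coeff d f ≠ 0 := MvPolynomial.mem_support_iff.mp hd
    have h1 := N.smul_mem (coeff d f)⁻¹ (hmono f hf d)
    rwa [smul_monomial, smul_eq_mul, inv_mul_cancel₀ hc] at h1
  have hSne : Set.Nonempty {m : ℕ | ∃ d : Fin n →₀ ℕ, sdeg d = m ∧ monomial d 1 ∈ N} := by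
    obtain ⟨f, hfN, hf0⟩ := Submodule.exists_mem_ne_zero_of_ne_bot hN
    obtain ⟨d, hd⟩ := Finset.nonempty_iff_ne_empty.mpr
      (fun h => hf0 (MvPolynomial.support_eq_empty.mp h))
    exact ⟨sdeg d, d, rfl, hmono1 f hfN d hd⟩
  set S : Set ℕ := {m : ℕ | ∃ d : Fin n →₀ ℕ, sdeg d = m ∧ monomial d 1 ∈ N} with hSdef
  set k := sInf S with hkdef
  obtain ⟨d0, hd0deg, hd0N⟩ := Nat.sInf_mem hSne
  refine ⟨k, le_antisymm ?_ ?_⟩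
  · intro f hf
    rw [f.as_sum]
    refine Submodule.sum_mem _ (fun d hd => ?_)
    have h2 : monomial d 1 ∈ N := hmono1 f hf d hd
    have hkd : k ≤ sdeg d := Nat.sInf_le ⟨d, rfl, h2⟩
    have he : monomial d (coeff d f) = (coeff d f) • monomial d 1 := by
      rw [smul_monomial, smul_eq_mul, mul_one]
    rw [he]
    exact Submodule.smul_mem _ _
      (Submodule.subset_span ⟨d, by rw [sdeg_eq_fsum]; exact hkd, rfl⟩)
  · rw [Submodule.span_le]
    rintro m ⟨d, hkd, rfl⟩
    rw [sdeg_eq_fsum] at hkd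
    have hex : ∀ (j : ℕ) (d : Fin n →₀ ℕ), sdeg d = k + j →
        ∃ d1, d1 ≤ d ∧ sdeg d1 = k := by
      intro j
      induction j with
      | zero => exact fun d h => ⟨d, le_refl d, by omega⟩
      | succ j ih =>
        intro d h
        obtain ⟨i, hi⟩ : ∃ i, d i ≠ 0 := by
          by_contra hcon; push_neg at hcon
          have h0 : sdeg d = 0 := Finset.sum_eq_zero (fun i _ => hcon i)
          omega
        have hsle : Finsupp.single i 1 ≤ d := by rw [Finsupp.single_le_iff]; omega
        set t := d - Finsupp.single i 1 with htdef
        have hdt : d = t + Finsupp.single i 1 := (tsub_add_cancel_of_le hsle).symm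
        have hst : sdeg t = k + j := by
          have h2 := sdeg_add t (Finsupp.single i 1)
          rw [← hdt, sdeg_single] at h2
          omega
        obtain ⟨d1, h1, h2⟩ := ih t hst
        exact ⟨d1, le_trans h1 (by rw [hdt]; exact self_le_add_right t _), h2⟩
    obtain ⟨d1, hd1le, hd1deg⟩ := hex (sdeg d - k) d (by omega)
    have hd1N : monomial d1 1 ∈ N := connN N hmv d0 d1 (by omega) hn hd0N
    have he : monomial d (1 : K) = monomial (d - d1) 1 * monomial d1 1 := by
      rw [monomial_mul, one_mul, tsub_add_cancel_of_le hd1le]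
    rw [he]
    exact hmul _ _ hd1N
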